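/- Termination of Algorithm 1: if every feasible solution in X has nonempty support, then the sequence of recorded solutions F(1), F(2), ... produced by the knockout algorithm consists of pairwise distinct elements of X, and therefore the algorithm terminates in at most |X| iterations. -/

import Mathlib

theorem Finset.injective_of_knockout {ι α : Type*} [LinearOrder ι] [DecidableEq α]
    {F : ι → Finset α}
    (hstep : ∀ t, ∃ D : Finset α, (∀ u, u < t → (D ∩ F u).Nonempty) ∧ F t ∩ D = ∅) :
    Function.Injective F := by
  refine Function.Injective.of_lt_imp_ne fun u t hut heq => ?_
  obtain ⟨D, hhit, hmiss⟩ := hstep t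
  have hhit_t : (D ∩ F t).Nonempty := heq ▸ hhit u hut
  rw [Finset.inter_comm, hmiss] at hhit_t
  exact Finset.not_nonempty_empty hhit_t

theorem algorithm1_termination_general
    (n m : ℕ) (X : Finset (Finset (Fin n)))
    (F : Fin m → Finset (Fin n)) (hmem : ∀ t, F t ∈ X)
    (hstep : ∀ t' : Fin m, ∃ D : Finset (Fin n),
      (∀ u : Fin m, u < t' → (D ∩ F u).Nonempty) ∧ F t' ∩ D = ∅) :
    (∀ t u : Fin m, t ≠ u → F t ≠ F u) ∧ m ≤ X.card := by
  have hinj : Function.Injective F := Finset.injective_of_knockout hstep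
  refine ⟨fun t u => mt (@hinj t u), ?_⟩
  simpa using Finset.card_le_card_of_injOn (s := Finset.univ) F (fun t _ => hmem t) hinj.injOn

theorem algorithm1_termination
    (n m : ℕ) (X : Finset (Finset (Fin n)))
    (hX : ∀ s ∈ X, s.Nonempty)
    (F : Fin m → Finset (Fin n)) (hmem : ∀ t, F t ∈ X)
    (hstep : ∀ t' : Fin m, ∃ D : Finset (Fin n),
      (∀ u : Fin m, u < t' → (D ∩ F u).Nonempty) ∧ F t' ∩ D = ∅) :
    (∀ t u : Fin m, t ≠ u → F t ≠ F u) ∧ m ≤ X.card :=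
  algorithm1_termination_general n m X F hmem hstep
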